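/- arXiv:2601.22010 — 3 statements merged into one kernel-verified Lean document; each statement's English description precedes it below -/
import Mathlib

section
/- Let $H \in \mathbb{R}^{d\times N}$ have rank $r \le d - N$ and let $\alpha > 0$. Then there exists a matrix $V \in \mathbb{R}^{d\times N}$ with $V^\top V = \alpha I_N$ such that the matrix $(H+V)^\top (H+V)$ is positive definite. -/
/-!
The kernel of `Hᵀ` (the orthogonal complement of the column space of `H`) has dimension
`d - rank H ≥ N`, so it contains `N` orthonormal vectors; `V` is `√α` times the matrix with these
columns. Then `Hᵀ V = 0`, hence `(H + V)ᵀ (H + V) = Hᵀ H + α I`, which is positive definite.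
-/

open Matrix

theorem Submodule.exists_orthonormal_of_card_le_finrank {𝕜 E ι : Type*} [RCLike 𝕜]
    [NormedAddCommGroup E] [InnerProductSpace 𝕜 E] [Fintype ι] (K : Submodule 𝕜 E)
    [FiniteDimensional 𝕜 K] (h : Fintype.card ι ≤ Module.finrank 𝕜 K) :
    ∃ v : ι → E, Orthonormal 𝕜 v ∧ ∀ i, v i ∈ K := by
  obtain ⟨emb⟩ := Function.Embedding.nonempty_of_card_le (h.trans_eq (Fintype.card_fin _).symm)
  let b := stdOrthonormalBasis 𝕜 K
  exact ⟨fun i => b (emb i), (b.orthonormal.comp emb emb.injective).comp_linearIsometry K.subtypeₗᵢ,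
    fun i => (b (emb i)).2⟩

theorem Matrix.rank_add_finrank_ker_toEuclideanLin {𝕜 m n : Type*} [RCLike 𝕜] [Fintype m]
    [Fintype n] [DecidableEq n] (A : Matrix m n 𝕜) :
    A.rank + Module.finrank 𝕜 (LinearMap.ker (toEuclideanLin A)) = Fintype.card n := by
  rw [rank_eq_finrank_range_toLin A (EuclideanSpace.basisFun m 𝕜).toBasis
    (EuclideanSpace.basisFun n 𝕜).toBasis, ← toEuclideanLin_eq_toLin_orthonormal,
    LinearMap.finrank_range_add_finrank_ker, finrank_euclideanSpace]

theorem Matrix.exists_transpose_mul_self_eq_one_and_transpose_mul_eq_zero {m n p : Type*}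
    [Fintype m] [Fintype n] [Fintype p] [DecidableEq m] [DecidableEq p] (H : Matrix m n ℝ)
    (h : H.rank + Fintype.card p ≤ Fintype.card m) :
    ∃ U : Matrix m p ℝ, Uᵀ * U = 1 ∧ Hᵀ * U = 0 := by
  have hker := Hᵀ.rank_add_finrank_ker_toEuclideanLin
  rw [rank_transpose] at hker
  obtain ⟨v, hv, hvker⟩ := (LinearMap.ker (toEuclideanLin Hᵀ)).exists_orthonormal_of_card_le_finrank
    (ι := p) (by omega)
  refine ⟨of fun i j => v j i, ?_, ?_⟩
  · have hgram := gram_eq_conjTranspose_mul (EuclideanSpace.basisFun m ℝ) v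
    rw [gram_eq_one_iff_orthonormal.mpr hv, conjTranspose_eq_transpose_of_trivial] at hgram
    simpa using hgram.symm
  · ext j k
    simpa [mul_apply, mulVec, dotProduct] using congr_arg (· j) (congrArg WithLp.ofLp (hvker k))

theorem Matrix.transpose_mul_self_add_of_transpose_mul_eq_zero {m n : Type*} [Fintype m]
    {H V : Matrix m n ℝ} (hHV : Hᵀ * V = 0) :
    (H + V)ᵀ * (H + V) = Hᵀ * H + Vᵀ * V := by
  have hVH : Vᵀ * H = 0 := by simpa using congrArg transpose hHV
  rw [transpose_add, Matrix.add_mul, Matrix.mul_add, Matrix.mul_add, hHV, hVH, add_zero, zero_add]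

theorem stmt_0 (d N : ℕ) (hdN : N ≤ d) (H : Matrix (Fin d) (Fin N) ℝ) (α : ℝ) (hα : 0 < α)
    (hrank : H.rank ≤ d - N) :
    ∃ V : Matrix (Fin d) (Fin N) ℝ,
      Vᵀ * V = α • (1 : Matrix (Fin N) (Fin N) ℝ) ∧ ((H + V)ᵀ * (H + V)).PosDef := by
  obtain ⟨U, hUU, hHU⟩ := H.exists_transpose_mul_self_eq_one_and_transpose_mul_eq_zero
    (p := Fin N) (by simp only [Fintype.card_fin]; omega)
  have hVV : (√α • U)ᵀ * (√α • U) = α • 1 := by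
    rw [transpose_smul, Matrix.smul_mul, Matrix.mul_smul, smul_smul, hUU, Real.mul_self_sqrt hα.le]
  refine ⟨√α • U, hVV, ?_⟩
  rw [transpose_mul_self_add_of_transpose_mul_eq_zero (by rw [Matrix.mul_smul, hHU, smul_zero]), hVV]
  have hHH := posSemidef_conjTranspose_mul_self H
  rw [conjTranspose_eq_transpose_of_trivial] at hHH
  exact PosDef.posSemidef_add hHH (PosDef.one.smul hα)
end

section
/- Let $\alpha > 0$, $V \in \mathbb{R}^{d\times N}$ with $V^\top V = \alpha I$, and $U$ in the tangent space at $V$ (i.e., $V^\top U + U^\top V = 0$) with $\|U\|_F \le \sqrt{\alpha}$. Then the polar retraction $\mathrm{R}_V(U) = \sqrt{\alpha}(V+U)(\alpha I + U^\top U)^{-1/2}$ satisfies $\|\mathrm{R}_V(U) - (V+U)\|_F \le \frac{1}{\sqrt{\alpha}}\|U\|_F^2$. -/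
open Matrix

/-- Frobenius norm of a real matrix. -/
noncomputable def frob {m n : Type*} [Fintype m] [Fintype n] (A : Matrix m n ℝ) : ℝ :=
  Real.sqrt (Matrix.trace (Aᵀ * A))

open scoped ComplexOrder in
/-- The positive semidefinite square root of a positive semidefinite matrix
(the definition `Matrix.PosSemidef.sqrt` of the older Mathlib, removed since). -/
noncomputable def Matrix.PosSemidef.sqrt {n : Type*} {𝕜 : Type*} [Fintype n] [DecidableEq n]
    [RCLike 𝕜] {A : Matrix n n 𝕜} (hA : A.PosSemidef) : Matrix n n 𝕜 :=
  hA.1.eigenvectorUnitary.1 * diagonal ((↑) ∘ (√·) ∘ hA.1.eigenvalues) *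
    (star hA.1.eigenvectorUnitary : Matrix n n 𝕜)

/-!
Write `W = V + U` and `P = (α I + UᵀU)^{1/2}`. Tangency gives `WᵀW = VᵀV + UᵀU = P²`, hence
`‖W X‖_F = ‖P X‖_F` for every `X`, and the error `W (√α P⁻¹ - I)` has the Frobenius norm of
`√α I - P`. Now `(√α I - P)(√α I + P) = -UᵀU` and `(√α I + P)² ≥ α I` because `P ≥ 0`, so
`√α ‖√α I - P‖_F ≤ ‖UᵀU‖_F ≤ ‖U‖_F²`.
-/

open scoped ComplexOrder in
lemma Matrix.PosSemidef.posSemidef_sqrt {n : Type*} {𝕜 : Type*} [Fintype n] [DecidableEq n]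
    [RCLike 𝕜] {A : Matrix n n 𝕜} (hA : A.PosSemidef) : hA.sqrt.PosSemidef := by
  have hD : (diagonal ((↑) ∘ (√·) ∘ hA.1.eigenvalues : n → 𝕜)).PosSemidef :=
    PosSemidef.diagonal fun i => by simp [RCLike.ofReal_nonneg, Real.sqrt_nonneg]
  simpa [Matrix.PosSemidef.sqrt, Matrix.star_eq_conjTranspose] using
    hD.mul_mul_conjTranspose_same (hA.1.eigenvectorUnitary : Matrix n n 𝕜)

open scoped ComplexOrder in
lemma Matrix.PosSemidef.sqrt_mul_self {n : Type*} {𝕜 : Type*} [Fintype n] [DecidableEq n]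
    [RCLike 𝕜] {A : Matrix n n 𝕜} (hA : A.PosSemidef) : hA.sqrt * hA.sqrt = A := by
  set u : Matrix n n 𝕜 := hA.1.eigenvectorUnitary.1
  set D : Matrix n n 𝕜 := diagonal ((↑) ∘ (√·) ∘ hA.1.eigenvalues)
  have hu : star u * u = 1 := Unitary.star_mul_self_of_mem hA.1.eigenvectorUnitary.2
  have hD : D * D = diagonal (RCLike.ofReal ∘ hA.1.eigenvalues) := by
    rw [diagonal_mul_diagonal]
    congr 1
    funext i
    simp only [Function.comp_apply, ← RCLike.ofReal_mul,
      Real.mul_self_sqrt (hA.eigenvalues_nonneg i)]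
  conv_rhs => rw [hA.1.spectral_theorem, Unitary.conjStarAlgAut_apply]
  calc hA.sqrt * hA.sqrt = u * D * (star u * u) * D * star u := by
        simp only [Matrix.PosSemidef.sqrt, u, D, Matrix.mul_assoc]
    _ = _ := by rw [hu, Matrix.mul_one, Matrix.mul_assoc u D D, hD]

section Frobenius

variable {l m n : Type*} [Fintype l] [Fintype m] [Fintype n]

attribute [local instance] Matrix.frobeniusNormedAddCommGroup

theorem frob_eq_frobenius_norm (A : Matrix m n ℝ) : frob A = ‖A‖ := by
  rw [frob, frobenius_norm_def, Real.sqrt_eq_rpow, Finset.sum_comm]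
  simp [trace, mul_apply, sq]

theorem frob_nonneg (A : Matrix m n ℝ) : 0 ≤ frob A :=
  frob_eq_frobenius_norm A ▸ norm_nonneg A

theorem frob_neg (A : Matrix m n ℝ) : frob (-A) = frob A := by
  simp only [frob_eq_frobenius_norm, norm_neg]

theorem frob_mul_le (A : Matrix l m ℝ) (B : Matrix m n ℝ) : frob (A * B) ≤ frob A * frob B := by
  simpa only [frob_eq_frobenius_norm] using frobenius_norm_mul A B

theorem frob_transpose (A : Matrix m n ℝ) : frob Aᵀ = frob A := by
  simp only [frob_eq_frobenius_norm, frobenius_norm_transpose]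

theorem frob_sq (A : Matrix m n ℝ) : frob A ^ 2 = trace (Aᵀ * A) :=
  Real.sq_sqrt (by simpa using (posSemidef_conjTranspose_mul_self A).trace_nonneg)

theorem frob_mul_eq_of_transpose_mul_self_eq {k : Type*} [Fintype k] {A : Matrix k m ℝ}
    {B : Matrix l m ℝ} (h : Aᵀ * A = Bᵀ * B) (X : Matrix m n ℝ) : frob (A * X) = frob (B * X) := by
  rw [frob, frob, transpose_mul, transpose_mul, Matrix.mul_assoc, ← Matrix.mul_assoc Aᵀ, h,
    Matrix.mul_assoc Xᵀ, Matrix.mul_assoc Bᵀ]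

theorem mul_frob_sq_le_frob_mul_sq [DecidableEq m] {c : ℝ} {Q : Matrix m n ℝ}
    (hQ : (Q * Qᵀ - c • 1).PosSemidef) (B : Matrix l m ℝ) :
    c * frob B ^ 2 ≤ frob (B * Q) ^ 2 := by
  have hconj : 0 ≤ trace (B * (Q * Qᵀ - c • 1) * Bᵀ) := by
    simpa using (hQ.mul_mul_conjTranspose_same B).trace_nonneg
  have hexpand : trace (B * (Q * Qᵀ - c • 1) * Bᵀ) = frob (B * Q) ^ 2 - c * frob B ^ 2 := by
    rw [frob_sq, frob_sq, Matrix.mul_sub, Matrix.sub_mul, trace_sub, Matrix.mul_smul,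
      Matrix.smul_mul, trace_smul, Matrix.mul_one, smul_eq_mul, trace_mul_comm B Bᵀ,
      transpose_mul, trace_mul_comm _ (B * Q), Matrix.mul_assoc B Q, Matrix.mul_assoc,
      Matrix.mul_assoc]
  linarith

theorem mul_frob_smul_one_sub_le [DecidableEq n] {c : ℝ} (hc : 0 ≤ c) {P : Matrix n n ℝ}
    (hP : P.PosSemidef) : c * frob (c • 1 - P) ≤ frob (P * P - c ^ 2 • 1) := by
  have hPt : Pᵀ = P := by simpa using hP.isHermitian.eq
  set Q : Matrix n n ℝ := c • 1 + P
  have hQ : (Q * Qᵀ - c ^ 2 • 1).PosSemidef := by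
    have hexpand : Q * Qᵀ - c ^ 2 • 1 = (2 * c) • P + Pᴴ * P := by
      simp only [Q, transpose_add, transpose_smul, transpose_one, hPt,
        conjTranspose_eq_transpose_of_trivial, Matrix.add_mul, Matrix.mul_add, Matrix.smul_mul,
        Matrix.mul_smul, Matrix.one_mul, Matrix.mul_one, smul_add, smul_smul, sq, two_mul,
        add_smul]
      abel
    rw [hexpand]
    exact (hP.smul (by positivity)).add (posSemidef_conjTranspose_mul_self P)
  have hEQ : (c • 1 - P) * Q = -(P * P - c ^ 2 • 1) := by
    simp only [Q, Matrix.sub_mul, Matrix.mul_add, Matrix.smul_mul, Matrix.mul_smul,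
      Matrix.one_mul, Matrix.mul_one, smul_sub, smul_smul, sq]
    abel
  have hsq := mul_frob_sq_le_frob_mul_sq hQ (c • 1 - P)
  rw [hEQ, frob_neg, ← mul_pow] at hsq
  exact (pow_le_pow_iff_left₀ (mul_nonneg hc (frob_nonneg _)) (frob_nonneg _) two_ne_zero).mp hsq

end Frobenius

theorem stmt_4_general (d N : ℕ) (V U : Matrix (Fin d) (Fin N) ℝ) (α : ℝ) (hα : 0 < α)
    (hV : Vᵀ * V = α • (1 : Matrix (Fin N) (Fin N) ℝ))
    (hU : Vᵀ * U + Uᵀ * V = 0)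
    (hP : (α • (1 : Matrix (Fin N) (Fin N) ℝ) + Uᵀ * U).PosSemidef) :
    frob (Real.sqrt α • ((V + U) * (hP.sqrt)⁻¹) - (V + U)) ≤
      (1 / Real.sqrt α) * frob U ^ 2 := by
  set s := Real.sqrt α
  have hs : 0 < s := Real.sqrt_pos.mpr hα
  set P := hP.sqrt
  have hPt : Pᵀ = P := by simpa using hP.posSemidef_sqrt.isHermitian.eq
  have hPP : P * P = α • 1 + Uᵀ * U := hP.sqrt_mul_self
  have hP_det : IsUnit P.det := by
    have hpd := (PosDef.one.smul hα).add_posSemidef (posSemidef_conjTranspose_mul_self U)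
    rw [conjTranspose_eq_transpose_of_trivial, ← hPP] at hpd
    exact (P.isUnit_iff_isUnit_det).mp (isUnit_of_mul_isUnit_left hpd.isUnit)
  have hW : (V + U)ᵀ * (V + U) = Pᵀ * P := by
    rw [hPt, hPP, transpose_add, Matrix.add_mul, Matrix.mul_add, Matrix.mul_add, hV, add_assoc,
      ← add_assoc (Vᵀ * U), hU, zero_add]
  have hretr : s • ((V + U) * P⁻¹) - (V + U) = (V + U) * (s • P⁻¹ - 1) := by
    rw [Matrix.mul_sub, Matrix.mul_smul, Matrix.mul_one]
  have hPX : P * (s • P⁻¹ - 1) = s • 1 - P := by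
    rw [Matrix.mul_sub, Matrix.mul_smul, mul_nonsing_inv P hP_det, Matrix.mul_one]
  calc frob (s • ((V + U) * P⁻¹) - (V + U)) = frob (s • 1 - P) := by
        rw [hretr, frob_mul_eq_of_transpose_mul_self_eq hW, hPX]
    _ ≤ frob (P * P - s ^ 2 • 1) / s :=
        (le_div_iff₀' hs).mpr (mul_frob_smul_one_sub_le hs.le hP.posSemidef_sqrt)
    _ = frob (Uᵀ * U) / s := by rw [hPP, Real.sq_sqrt hα.le, add_sub_cancel_left]
    _ ≤ frob Uᵀ * frob U / s := by gcongr; exact frob_mul_le _ _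
    _ = 1 / s * frob U ^ 2 := by rw [frob_transpose]; ring

theorem stmt_4 (d N : ℕ) (V U : Matrix (Fin d) (Fin N) ℝ) (α : ℝ) (hα : 0 < α)
    (hV : Vᵀ * V = α • (1 : Matrix (Fin N) (Fin N) ℝ))
    (hU : Vᵀ * U + Uᵀ * V = 0)
    (hUF : frob U ≤ Real.sqrt α)
    (hP : (α • (1 : Matrix (Fin N) (Fin N) ℝ) + Uᵀ * U).PosSemidef) :
    frob (Real.sqrt α • ((V + U) * (hP.sqrt)⁻¹) - (V + U)) ≤
      (1 / Real.sqrt α) * frob U ^ 2 :=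
  stmt_4_general d N V U α hα hV hU hP
end

section
/- Let $H \in \mathbb{R}^{d\times N}$ be nonzero and let $V_0$ satisfy $V_0^\top V_0 = \alpha I$, $H^\top V_0 = 0$, with $\alpha > 0$. Let $\ell(V) = -\log\det((H+V)^\top(H+V))$ and let $\mathrm{grad}\,\ell(V_0)$ denote the projection of $\nabla\ell(V_0) = -2(H+V_0)[(H+V_0)^\top(H+V_0)]^{-1}$ onto the tangent space at $V_0$. Then $\langle H, \mathrm{grad}\,\ell(V_0)\rangle = -2\,\mathrm{Tr}\big(H^\top H (H^\top H + \alpha I)^{-1}\big) < 0$, so $H$ is a descent direction for $\ell$ at $V_0$. -/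
/-!
Because `Hᵀ V₀ = 0`, the matrix `Hᵀ` kills the normal component `V₀ (⋯)` removed by the tangent
projection, and the Gram matrix `(H + V₀)ᵀ (H + V₀)` splits as `M = HᵀH + αI`, which is positive
definite. Hence `⟨H, grad ℓ(V₀)⟩ = -2 tr(HᵀH M⁻¹)`, and `tr(HᵀH M⁻¹) = tr(H M⁻¹ Hᵀ)` is the trace
of a positive semidefinite matrix whose diagonal entry at any nonzero row of `H` is positive.
-/
open Matrix
open scoped ComplexOrder

theorem Matrix.PosDef.mul_mul_conjTranspose_apply_self_pos {m n 𝕜 : Type*} [Fintype n]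
    [RCLike 𝕜] {P : Matrix n n 𝕜} (hP : P.PosDef) {A : Matrix m n 𝕜} {i : m} (hi : A i ≠ 0) :
    0 < (A * P * Aᴴ) i i := by
  have h : (A * P * Aᴴ) i i = star (star (A i)) ⬝ᵥ P *ᵥ star (A i) := by
    simp only [star_star, dotProduct_mulVec]; rfl
  exact h ▸ hP.dotProduct_mulVec_pos (star_ne_zero.mpr hi)

theorem Matrix.PosDef.trace_conjTranspose_mul_self_mul_pos {m n 𝕜 : Type*} [Fintype m] [Fintype n]
    [RCLike 𝕜] {P : Matrix n n 𝕜} (hP : P.PosDef) {A : Matrix m n 𝕜} (hA : A ≠ 0) :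
    0 < (Aᴴ * A * P).trace := by
  obtain ⟨i, hi⟩ : ∃ i, A i ≠ 0 := Function.ne_iff.mp hA
  have hpsd : (A * P * Aᴴ).PosSemidef := hP.posSemidef.mul_mul_conjTranspose_same A
  have hne : A * P * Aᴴ ≠ 0 := fun h =>
    (hP.mul_mul_conjTranspose_apply_self_pos hi).ne' (by simp [h])
  rw [← trace_mul_cycle A P Aᴴ]
  exact hpsd.trace_nonneg.lt_of_ne' (mt hpsd.trace_eq_zero_iff.mp hne)

theorem Matrix.transpose_add_mul_add_of_transpose_mul_eq_zero {R m n : Type*} [CommRing R]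
    [Fintype m] {H V : Matrix m n R} (hHV : Hᵀ * V = 0) :
    (H + V)ᵀ * (H + V) = Hᵀ * H + Vᵀ * V := by
  have hVH : Vᵀ * H = 0 := by simpa [transpose_mul] using congrArg transpose hHV
  rw [transpose_add, Matrix.add_mul, Matrix.mul_add, Matrix.mul_add, hHV, hVH, add_zero,
    zero_add]

section TangentProjection

variable {K m n : Type*} [Field K] [Fintype m] [Fintype n]

noncomputable def logDetGrad [DecidableEq n] (V : Matrix m n K) : Matrix m n K :=
  (-2 : K) • (V * (Vᵀ * V)⁻¹)

def tangentProj (α : K) (V₀ U : Matrix m n K) : Matrix m n K :=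
  U - V₀ * ((2 * α)⁻¹ • (V₀ᵀ * U + Uᵀ * V₀))

theorem transpose_mul_tangentProj {α : K} {H V₀ : Matrix m n K} (hHV : Hᵀ * V₀ = 0)
    (U : Matrix m n K) : Hᵀ * tangentProj α V₀ U = Hᵀ * U := by
  rw [tangentProj, Matrix.mul_sub, ← Matrix.mul_assoc, hHV, Matrix.zero_mul, sub_zero]

theorem transpose_mul_logDetGrad_add [DecidableEq n] {H V₀ : Matrix m n K} (hHV : Hᵀ * V₀ = 0) :
    Hᵀ * logDetGrad (H + V₀) = (-2 : K) • (Hᵀ * H * ((H + V₀)ᵀ * (H + V₀))⁻¹) := by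
  rw [logDetGrad, Matrix.mul_smul, ← Matrix.mul_assoc, Matrix.mul_add, hHV, add_zero]

end TangentProjection

theorem stmt_12 (d N : ℕ) (α : ℝ) (hα : 0 < α) (H V₀ : Matrix (Fin d) (Fin N) ℝ)
    (hH : H ≠ 0)
    (hV : V₀ᵀ * V₀ = α • (1 : Matrix (Fin N) (Fin N) ℝ)) (hHV : Hᵀ * V₀ = 0) :
    Matrix.trace (Hᵀ *
        (((-2 : ℝ) • ((H + V₀) * ((H + V₀)ᵀ * (H + V₀))⁻¹)) -
          V₀ * ((2 * α)⁻¹ •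
            (V₀ᵀ * ((-2 : ℝ) • ((H + V₀) * ((H + V₀)ᵀ * (H + V₀))⁻¹)) +
              ((-2 : ℝ) • ((H + V₀) * ((H + V₀)ᵀ * (H + V₀))⁻¹))ᵀ * V₀)))) =
      -2 * Matrix.trace (Hᵀ * H * (Hᵀ * H + α • (1 : Matrix (Fin N) (Fin N) ℝ))⁻¹) ∧
    Matrix.trace (Hᵀ *
        (((-2 : ℝ) • ((H + V₀) * ((H + V₀)ᵀ * (H + V₀))⁻¹)) -
          V₀ * ((2 * α)⁻¹ •
            (V₀ᵀ * ((-2 : ℝ) • ((H + V₀) * ((H + V₀)ᵀ * (H + V₀))⁻¹)) +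
              ((-2 : ℝ) • ((H + V₀) * ((H + V₀)ᵀ * (H + V₀))⁻¹))ᵀ * V₀)))) < 0 := by
  change (Hᵀ * tangentProj α V₀ (logDetGrad (H + V₀))).trace = _ ∧
    (Hᵀ * tangentProj α V₀ (logDetGrad (H + V₀))).trace < 0
  have hgrad : Hᵀ * tangentProj α V₀ (logDetGrad (H + V₀)) =
      (-2 : ℝ) • (Hᵀ * H * (Hᵀ * H + α • 1)⁻¹) := by
    rw [transpose_mul_tangentProj hHV, transpose_mul_logDetGrad_add hHV,
      transpose_add_mul_add_of_transpose_mul_eq_zero hHV, hV]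
  have hgram : (Hᵀ * H + α • (1 : Matrix (Fin N) (Fin N) ℝ)).PosDef := by
    simpa using (PosDef.one.smul hα).posSemidef_add (posSemidef_conjTranspose_mul_self H)
  have hpos := hgram.inv.trace_conjTranspose_mul_self_mul_pos hH
  rw [conjTranspose_eq_transpose_of_trivial] at hpos
  rw [hgrad, trace_smul, smul_eq_mul]
  exact ⟨rfl, by linarith⟩
end
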